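/- arXiv:1605.02219 — 2 statements merged into one kernel-verified Lean document; each statement's English description precedes it below -/
import Mathlib

section
/- Let φ : M₃(ℂ) → M₃(ℂ) be the map determined by parameters b₁, b₂, c₁, c₂ ∈ ℂ and δ₁, δ₂, σ₁, σ₂ ≥ 0, with ε_i = |b_i| + |c_i|, given by φ(X) = [[(ε₁²+δ₁²)x₁₁ + σ₂²x₂₂, 0, b₁x₁₃ + c₁x₃₁], [0, (ε₂²+δ₂²)x₂₂ + σ₁²x₁₁, b₂x₂₃ + c₂x₃₂], [conj(b₁)x₃₁ + conj(c₁)x₁₃, conj(b₂)x₃₂ + conj(c₂)x₂₃, x₃₃]] for X = (x_{ij}) ∈ M₃(ℂ). Then φ is a positive map if and only if σ₁σ₂ + δ₁δ₂ ≥ ε₁ε₂. -/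
/-!
For Hermitian `X`, `φ(X)` is an arrow matrix: diagonal `A = (ε₁² + δ₁²) x₁₁ + σ₂² x₂₂`,
`B = (ε₂² + δ₂²) x₂₂ + σ₁² x₁₁`, `x₃₃`, and last column `wᵢ = bᵢ xᵢ₃ + cᵢ x̄ᵢ₃`.

If `X ≥ 0` then `|wᵢ| ≤ εᵢ |xᵢ₃| ≤ εᵢ √(xᵢᵢ x₃₃)`, and the quadratic form of `φ(X)` is bounded
below by a sum of three squares plus `2 (σ₁σ₂ + δ₁δ₂ - ε₁ε₂) · (nonnegative)`.

Conversely, choose unit phases `μᵢ, νᵢ` with `νᵢ (bᵢ μᵢ + cᵢ μ̄ᵢ) = εᵢ` and test `φ(ηη*)`,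
`η = (μ₁, t μ₂, 1)`, against `y = (p ν̄₁, q ν̄₂, -1)`. This gives
`2 (ε₁ p + ε₂ t q) ≤ A p² + B q² + 1` for all real `p, q`, whose Schur complement
`AB - ε₁² B - ε₂² t² A = (δ₁σ₁)² - M t² + (δ₂σ₂)² t⁴`, with `M = ε₁²ε₂² - δ₁²δ₂² - σ₁²σ₂²`, is
nonnegative for every `t`. A discriminant argument in `t²` gives `M ≤ 2 δ₁δ₂σ₁σ₂`, that is
`ε₁ε₂ ≤ σ₁σ₂ + δ₁δ₂`.
-/

open scoped ComplexOrder
open Matrix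

noncomputable section
namespace Paper

/-- A map between matrix algebras is positive if it sends positive semidefinite
matrices to positive semidefinite matrices. -/
def IsPosMap {m n : Type*} [Fintype m] [Fintype n]
    (φ : Matrix m m ℂ → Matrix n n ℂ) : Prop :=
  ∀ X : Matrix m m ℂ, X.PosSemidef → (φ X).PosSemidef

/-- The rank one operator `ηη*`, i.e. `ζ ↦ ⟨η, ζ⟩ η`. -/
def rankOne {m : Type*} (η : m → ℂ) : Matrix m m ℂ :=
  Matrix.vecMulVec η (star η)

/-- The Choi matrix `∑ E_{ij} ⊗ φ(E_{ij})` of a map `φ`. -/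
def choi {m n : Type*} [Fintype m] [DecidableEq m]
    (φ : Matrix m m ℂ → Matrix n n ℂ) : Matrix (m × n) (m × n) ℂ :=
  Matrix.of fun p q => φ (Matrix.single p.1 q.1 1) p.2 q.2

/-- A map is completely positive iff its Choi matrix is positive semidefinite. -/
def IsCP {m n : Type*} [Fintype m] [DecidableEq m] [Fintype n]
    (φ : Matrix m m ℂ → Matrix n n ℂ) : Prop :=
  (choi φ).PosSemidef

/-- A map is completely copositive iff `X ↦ φ(Xᵀ)` is completely positive. -/
def IsCCP {m n : Type*} [Fintype m] [DecidableEq m] [Fintype n]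
    (φ : Matrix m m ℂ → Matrix n n ℂ) : Prop :=
  IsCP fun X => φ Xᵀ

/-- A map is decomposable iff it is the sum of a completely positive and a
completely copositive (linear) map. -/
def Decomposable {m n : Type*} [Fintype m] [DecidableEq m] [Fintype n]
    (φ : Matrix m m ℂ → Matrix n n ℂ) : Prop :=
  ∃ φ₁ φ₂ : Matrix m m ℂ →ₗ[ℂ] Matrix n n ℂ,
    IsCP (⇑φ₁) ∧ IsCCP (⇑φ₂) ∧ ∀ X, φ X = φ₁ X + φ₂ X

/-- The ampliation `id_{M₂(ℂ)} ⊗ φ`. -/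
def ampl2 {m n : Type*} (φ : Matrix m m ℂ → Matrix n n ℂ)
    (Y : Matrix (Fin 2 × m) (Fin 2 × m) ℂ) : Matrix (Fin 2 × n) (Fin 2 × n) ℂ :=
  Matrix.of fun p q => φ (Matrix.of fun a b => Y (p.1, a) (q.1, b)) p.2 q.2

/-- The ampliation `tran_{M₂(ℂ)} ⊗ φ`. -/
def ampl2T {m n : Type*} (φ : Matrix m m ℂ → Matrix n n ℂ)
    (Y : Matrix (Fin 2 × m) (Fin 2 × m) ℂ) : Matrix (Fin 2 × n) (Fin 2 × n) ℂ :=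
  Matrix.of fun p q => φ (Matrix.of fun a b => Y (q.1, a) (p.1, b)) p.2 q.2

/-- `φ` is 2-positive if `id_{M₂(ℂ)} ⊗ φ` is positive. -/
def Is2Pos {m n : Type*} [Fintype m] [Fintype n]
    (φ : Matrix m m ℂ → Matrix n n ℂ) : Prop :=
  IsPosMap (ampl2 φ)

/-- `φ` is 2-copositive if `tran_{M₂(ℂ)} ⊗ φ` is positive. -/
def Is2Copos {m n : Type*} [Fintype m] [Fintype n]
    (φ : Matrix m m ℂ → Matrix n n ℂ) : Prop :=
  IsPosMap (ampl2T φ)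

/-- A positive map `φ` is exposed if every positive (linear) map `ψ` vanishing
(in the sense `⟨y, ψ(ηη*) y⟩ = 0`) wherever `φ` vanishes is a nonnegative
multiple of `φ`. -/
def IsExposed {m n : Type*} [Fintype m] [Fintype n]
    (φ : Matrix m m ℂ → Matrix n n ℂ) : Prop :=
  IsPosMap φ ∧
    ∀ ψ : Matrix m m ℂ →ₗ[ℂ] Matrix n n ℂ, IsPosMap ⇑ψ →
      (∀ (η : m → ℂ) (y : n → ℂ),
        star y ⬝ᵥ (φ (rankOne η)).mulVec y = 0 →
          star y ⬝ᵥ (ψ (rankOne η)).mulVec y = 0) →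
      ∃ c : ℝ, 0 ≤ c ∧ ∀ X, ψ X = (c : ℂ) • φ X

/-- A positive map `φ` is optimal if there is no nonzero completely positive map
`ψ` with `φ − ψ` positive. -/
def IsOptimal {m n : Type*} [Fintype m] [DecidableEq m] [Fintype n]
    (φ : Matrix m m ℂ → Matrix n n ℂ) : Prop :=
  ¬∃ ψ : Matrix m m ℂ →ₗ[ℂ] Matrix n n ℂ,
      ψ ≠ 0 ∧ IsCP (⇑ψ) ∧ IsPosMap fun X => φ X - ψ X

/-- The index type of the direct sum `ℂᵃ ⊕ ℂᵇ ⊕ ℂ`. -/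
abbrev TI (a b : ℕ) := Fin a ⊕ (Fin b ⊕ Unit)

/-- The index of the distinguished one-dimensional summand. -/
def tidx {a b : ℕ} : TI a b := Sum.inr (Sum.inr ())

/-- Block `X₁₁` of a matrix on `ℂᵃ ⊕ ℂᵇ ⊕ ℂ`. -/
def blk11 {a b : ℕ} (X : Matrix (TI a b) (TI a b) ℂ) : Matrix (Fin a) (Fin a) ℂ :=
  Matrix.of fun i j => X (Sum.inl i) (Sum.inl j)

/-- Block `X₂₂`. -/
def blk22 {a b : ℕ} (X : Matrix (TI a b) (TI a b) ℂ) : Matrix (Fin b) (Fin b) ℂ :=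
  Matrix.of fun i j => X (Sum.inr (Sum.inl i)) (Sum.inr (Sum.inl j))

/-- Block `X₁₃`, viewed as a column vector. -/
def blk13 {a b : ℕ} (X : Matrix (TI a b) (TI a b) ℂ) : Fin a → ℂ :=
  fun i => X (Sum.inl i) tidx

/-- Block `X₃₁` (equivalently, the vector `X₃₁ᵀ`). -/
def blk31 {a b : ℕ} (X : Matrix (TI a b) (TI a b) ℂ) : Fin a → ℂ :=
  fun i => X tidx (Sum.inl i)

/-- Block `X₂₃`, viewed as a column vector. -/
def blk23 {a b : ℕ} (X : Matrix (TI a b) (TI a b) ℂ) : Fin b → ℂ :=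
  fun i => X (Sum.inr (Sum.inl i)) tidx

/-- Block `X₃₂` (equivalently, the vector `X₃₂ᵀ`). -/
def blk32 {a b : ℕ} (X : Matrix (TI a b) (TI a b) ℂ) : Fin b → ℂ :=
  fun i => X tidx (Sum.inr (Sum.inl i))

/-- `P` is the orthogonal projection onto the range of `A`: it is Hermitian,
idempotent, and has the same range as `A`. -/
def IsOrthProjOnRange {n m : Type*} [Fintype n] [Fintype m]
    (P : Matrix n n ℂ) (A : Matrix n m ℂ) : Prop :=
  P.IsHermitian ∧ P * P = P ∧
    LinearMap.range P.mulVecLin = LinearMap.range A.mulVecLin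

/-- The merging of the maps `φ₁`, `φ₂` by means of the operators `B₁, C₁, B₂, C₂`,
the functionals `ω₁, ω₂`, with `P₁, P₂` the orthogonal projections onto the ranges
of `φ₁(1)`, `φ₂(1)`. -/
def merging {k₁ k₂ h₁ h₂ : ℕ}
    (φ₁ : Matrix (Fin k₁) (Fin k₁) ℂ →ₗ[ℂ] Matrix (Fin h₁) (Fin h₁) ℂ)
    (φ₂ : Matrix (Fin k₂) (Fin k₂) ℂ →ₗ[ℂ] Matrix (Fin h₂) (Fin h₂) ℂ)
    (B₁ C₁ : Matrix (Fin h₁) (Fin k₁) ℂ) (B₂ C₂ : Matrix (Fin h₂) (Fin k₂) ℂ)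
    (ω₁ : Matrix (Fin k₁) (Fin k₁) ℂ →ₗ[ℂ] ℂ) (ω₂ : Matrix (Fin k₂) (Fin k₂) ℂ →ₗ[ℂ] ℂ)
    (P₁ : Matrix (Fin h₁) (Fin h₁) ℂ) (P₂ : Matrix (Fin h₂) (Fin h₂) ℂ)
    (X : Matrix (TI k₁ k₂) (TI k₁ k₂) ℂ) : Matrix (TI h₁ h₂) (TI h₁ h₂) ℂ :=
  Matrix.of fun p q =>
    match p, q with
    | Sum.inl a, Sum.inl b => φ₁ (blk11 X) a b + ω₂ (blk22 X) * P₁ a b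
    | Sum.inl _, Sum.inr (Sum.inl _) => 0
    | Sum.inl a, Sum.inr (Sum.inr _) => (B₁.mulVec (blk13 X) + C₁.mulVec (blk31 X)) a
    | Sum.inr (Sum.inl _), Sum.inl _ => 0
    | Sum.inr (Sum.inl a), Sum.inr (Sum.inl b) => φ₂ (blk22 X) a b + ω₁ (blk11 X) * P₂ a b
    | Sum.inr (Sum.inl a), Sum.inr (Sum.inr _) => (B₂.mulVec (blk23 X) + C₂.mulVec (blk32 X)) a
    | Sum.inr (Sum.inr _), Sum.inl b =>
        (Matrix.vecMul (blk31 X) B₁ᴴ + Matrix.vecMul (blk13 X) C₁ᴴ) b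
    | Sum.inr (Sum.inr _), Sum.inr (Sum.inl b) =>
        (Matrix.vecMul (blk32 X) B₂ᴴ + Matrix.vecMul (blk23 X) C₂ᴴ) b
    | Sum.inr (Sum.inr _), Sum.inr (Sum.inr _) => X tidx tidx

/-- The quantity `μᵢ(η, y) = √⟨y, φᵢ(ηη*) y⟩`. -/
def muQ {k h : ℕ} (φ : Matrix (Fin k) (Fin k) ℂ →ₗ[ℂ] Matrix (Fin h) (Fin h) ℂ)
    (η : Fin k → ℂ) (y : Fin h → ℂ) : ℝ :=
  Real.sqrt (star y ⬝ᵥ (φ (rankOne η)).mulVec y).re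

/-- The quantity `εᵢ(η, y) = |⟨y, Bη⟩| + |⟨y, C η̄⟩|`. -/
def epsQ {k h : ℕ} (B C : Matrix (Fin h) (Fin k) ℂ) (η : Fin k → ℂ) (y : Fin h → ℂ) : ℝ :=
  ‖(star y ⬝ᵥ B.mulVec η)‖ + ‖(star y ⬝ᵥ C.mulVec (star η))‖

/-- The quantity `δᵢ(η, y) = √(μᵢ(η,y)² − εᵢ(η,y)²)`. -/
def deltaQ {k h : ℕ} (φ : Matrix (Fin k) (Fin k) ℂ →ₗ[ℂ] Matrix (Fin h) (Fin h) ℂ)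
    (B C : Matrix (Fin h) (Fin k) ℂ) (η : Fin k → ℂ) (y : Fin h → ℂ) : ℝ :=
  Real.sqrt (muQ φ η y ^ 2 - epsQ B C η y ^ 2)

/-- The quantity `σᵢ(η, y) = √(ωᵢ(ηη*))·‖P y‖`. -/
def sigmaQ {k h : ℕ} (ω : Matrix (Fin k) (Fin k) ℂ →ₗ[ℂ] ℂ)
    (P : Matrix (Fin h) (Fin h) ℂ) (η : Fin k → ℂ) (y : Fin h → ℂ) : ℝ :=
  Real.sqrt (ω (rankOne η)).re * Real.sqrt (star (P.mulVec y) ⬝ᵥ P.mulVec y).re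

/-- The map `M₃(ℂ) → M₃(ℂ)` determined by `b₁, b₂, c₁, c₂ ∈ ℂ` and
`δ₁, δ₂, σ₁, σ₂ ≥ 0`, with `εᵢ = |bᵢ| + |cᵢ|`. -/
def phi3 (b₁ b₂ c₁ c₂ : ℂ) (δ₁ δ₂ σ₁ σ₂ : ℝ) (X : Matrix (Fin 3) (Fin 3) ℂ) :
    Matrix (Fin 3) (Fin 3) ℂ :=
  !![(((‖b₁‖ + ‖c₁‖) ^ 2 + δ₁ ^ 2 : ℝ) : ℂ) * X 0 0 +
        ((σ₂ ^ 2 : ℝ) : ℂ) * X 1 1,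
      0, b₁ * X 0 2 + c₁ * X 2 0;
    0,
      (((‖b₂‖ + ‖c₂‖) ^ 2 + δ₂ ^ 2 : ℝ) : ℂ) * X 1 1 +
        ((σ₁ ^ 2 : ℝ) : ℂ) * X 0 0,
      b₂ * X 1 2 + c₂ * X 2 1;
    (starRingEnd ℂ) b₁ * X 2 0 + (starRingEnd ℂ) c₁ * X 0 2,
      (starRingEnd ℂ) b₂ * X 2 1 + (starRingEnd ℂ) c₂ * X 1 2, X 2 2]

end Paper

open ComplexConjugate

theorem Complex.exists_norm_eq_one_mul_add_mul_conj_eq (b c : ℂ) :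
    ∃ μ ν : ℂ, ‖μ‖ = 1 ∧ ‖ν‖ = 1 ∧ ν * (b * μ + c * conj μ) = ‖b‖ + ‖c‖ := by
  set μ := exp (((arg c - arg b) / 2 : ℝ) * I)
  set ν := exp ((-(arg b + arg c) / 2 : ℝ) * I)
  refine ⟨μ, ν, norm_exp_ofReal_mul_I _, norm_exp_ofReal_mul_I _, ?_⟩
  have hb : ν * exp (arg b * I) * μ = 1 := by
    rw [← exp_add, ← exp_add, ← exp_zero]; congr 1; push_cast; ring
  have hc : ν * exp (arg c * I) * conj μ = 1 := by
    rw [← exp_conj, ← exp_add, ← exp_add, ← exp_zero, map_mul, conj_ofReal, conj_I]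
    congr 1; push_cast; ring
  linear_combination (ν * μ) * (norm_mul_exp_arg_mul_I b).symm +
    (ν * conj μ) * (norm_mul_exp_arg_mul_I c).symm + (‖b‖ : ℂ) * hb + (‖c‖ : ℂ) * hc

theorem Complex.norm_mul_add_mul_conj_le (b c x : ℂ) :
    ‖b * x + c * conj x‖ ≤ (‖b‖ + ‖c‖) * ‖x‖ :=
  (norm_add_le _ _).trans_eq (by rw [norm_mul, norm_mul, norm_conj]; ring)

theorem Complex.neg_mul_le_re_conj_mul_mul {w y z : ℂ} {r : ℝ} (hw : ‖w‖ ≤ r) :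
    -(r * ‖y‖ * ‖z‖) ≤ (conj y * w * z).re := by
  refine neg_le_of_abs_le ((abs_re_le_norm _).trans ?_)
  rw [norm_mul, norm_mul, norm_conj]
  nlinarith [norm_nonneg y, norm_nonneg z, mul_nonneg (norm_nonneg y) (norm_nonneg z)]

theorem Matrix.PosSemidef.norm_sq_apply_le {n : Type*} [Fintype n] {X : Matrix n n ℂ}
    (hX : X.PosSemidef) (i j : n) : ‖X i j‖ ^ 2 ≤ (X i i).re * (X j j).re := by
  have hdet := (hX.submatrix ![i, j]).det_nonneg
  rw [det_fin_two] at hdet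
  simp only [submatrix_apply, cons_val_zero, cons_val_one] at hdet
  rw [← hX.1.apply j i, Complex.star_def, Complex.mul_conj', ← hX.1.coe_re_apply_self i,
    ← hX.1.coe_re_apply_self j] at hdet
  simp only [RCLike.re_to_complex] at hdet
  have h := sub_nonneg.1 hdet
  norm_cast at h
  exact Complex.real_le_real.1 h

theorem Matrix.posSemidef_of_re_dotProduct_mulVec_nonneg {n : Type*} [Fintype n]
    {M : Matrix n n ℂ} (hM : M.IsHermitian) (h : ∀ y, 0 ≤ (star y ⬝ᵥ M *ᵥ y).re) :
    M.PosSemidef :=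
  .of_dotProduct_mulVec_nonneg hM fun y =>
    Complex.nonneg_iff.2 ⟨h y, (hM.im_star_dotProduct_mulVec_self y).symm⟩

theorem sq_mul_add_sq_mul_le_of_forall {A B α β : ℝ} (hA : 0 ≤ A) (hB : 0 ≤ B)
    (h : ∀ p q : ℝ, 2 * (α * p + β * q) ≤ A * p ^ 2 + B * q ^ 2 + 1) :
    α ^ 2 * B + β ^ 2 * A ≤ A * B := by
  set S := α ^ 2 * B + β ^ 2 * A
  have hS : 0 ≤ S := by positivity
  have hquad : ∀ k : ℝ, 0 ≤ A * B * S * (k * k) + (-2 * S) * k + 1 := fun k => by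
    have := h (α * B * k) (β * A * k)
    linear_combination this
  have := discrim_le_zero hquad
  rw [discrim] at this
  nlinarith [mul_nonneg hA hB]

theorem le_two_mul_of_forall_mul_sq_le {M d₁ d₂ : ℝ} (hd : 0 ≤ d₁ * d₂)
    (h : ∀ t : ℝ, M * t ^ 2 ≤ d₁ ^ 2 + d₂ ^ 2 * t ^ 4) : M ≤ 2 * (d₁ * d₂) := by
  rcases le_or_gt M 0 with hM | hM
  · linarith
  have hquad : ∀ x : ℝ, 0 ≤ d₂ ^ 2 * (x * x) + (-M) * x + d₁ ^ 2 := fun x => by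
    rcases le_or_gt x 0 with hx | hx
    · nlinarith [sq_nonneg d₁, sq_nonneg (d₂ * x)]
    · have := h (Real.sqrt x)
      rw [show Real.sqrt x ^ 4 = (Real.sqrt x ^ 2) ^ 2 by ring, Real.sq_sqrt hx.le] at this
      linarith
  have := discrim_le_zero hquad
  rw [discrim] at this
  nlinarith [abs_le_of_sq_le_sq' (show M ^ 2 ≤ (2 * (d₁ * d₂)) ^ 2 by linarith) (by positivity)]

namespace Paper

theorem two_mul_add_mul_le_of_mul_le_add_mul {e₁ e₂ δ₁ δ₂ σ₁ σ₂ s t u p q z : ℝ}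
    (hs : 0 ≤ s) (ht : 0 ≤ t) (hp : 0 ≤ p) (hq : 0 ≤ q)
    (h : e₁ * e₂ ≤ σ₁ * σ₂ + δ₁ * δ₂) :
    2 * (e₁ * s * p + e₂ * t * q) * (u * z) ≤
      ((e₁ ^ 2 + δ₁ ^ 2) * s ^ 2 + σ₂ ^ 2 * t ^ 2) * p ^ 2 +
        ((e₂ ^ 2 + δ₂ ^ 2) * t ^ 2 + σ₁ ^ 2 * s ^ 2) * q ^ 2 + u ^ 2 * z ^ 2 := by
  nlinarith [sq_nonneg (u * z - e₁ * s * p - e₂ * t * q), sq_nonneg (δ₁ * s * p - δ₂ * t * q),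
    sq_nonneg (σ₂ * t * p - σ₁ * s * q),
    mul_nonneg (sub_nonneg.2 h) (mul_nonneg (mul_nonneg hs hp) (mul_nonneg ht hq))]

theorem mul_le_add_mul_of_forall_two_mul_add_mul_le {e₁ e₂ δ₁ δ₂ σ₁ σ₂ : ℝ}
    (hδ : 0 ≤ δ₁ * δ₂) (hσ : 0 ≤ σ₁ * σ₂)
    (h : ∀ t p q : ℝ, 2 * (e₁ * p + e₂ * t * q) ≤
      (e₁ ^ 2 + δ₁ ^ 2 + σ₂ ^ 2 * t ^ 2) * p ^ 2 +
        ((e₂ ^ 2 + δ₂ ^ 2) * t ^ 2 + σ₁ ^ 2) * q ^ 2 + 1) :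
    e₁ * e₂ ≤ σ₁ * σ₂ + δ₁ * δ₂ := by
  have hschur : ∀ t : ℝ, (e₁ ^ 2 * e₂ ^ 2 - δ₁ ^ 2 * δ₂ ^ 2 - σ₁ ^ 2 * σ₂ ^ 2) * t ^ 2 ≤
      (δ₁ * σ₁) ^ 2 + (δ₂ * σ₂) ^ 2 * t ^ 4 := fun t => by
    have := sq_mul_add_sq_mul_le_of_forall (A := e₁ ^ 2 + δ₁ ^ 2 + σ₂ ^ 2 * t ^ 2)
      (B := (e₂ ^ 2 + δ₂ ^ 2) * t ^ 2 + σ₁ ^ 2) (α := e₁) (β := e₂ * t) (by positivity)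
      (by positivity) fun p q => (h t p q).trans_eq (by ring)
    linear_combination this
  have hM := le_two_mul_of_forall_mul_sq_le (by nlinarith) hschur
  have hsq : (e₁ * e₂) ^ 2 ≤ (σ₁ * σ₂ + δ₁ * δ₂) ^ 2 := by linear_combination hM
  exact (abs_le_of_sq_le_sq' hsq (by positivity)).2

section

open Complex

variable (b₁ b₂ c₁ c₂ : ℂ) (δ₁ δ₂ σ₁ σ₂ : ℝ) {X : Matrix (Fin 3) (Fin 3) ℂ}

theorem isHermitian_phi3 (hX : X.IsHermitian) :
    (phi3 b₁ b₂ c₁ c₂ δ₁ δ₂ σ₁ σ₂ X).IsHermitian := by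
  have hc : ∀ i j, conj (X i j) = X j i := fun i j => hX.apply j i
  ext i j
  fin_cases i <;> fin_cases j <;> simp [phi3, hc]

theorem re_star_dotProduct_phi3_mulVec (hX : X.IsHermitian) (y : Fin 3 → ℂ) :
    (star y ⬝ᵥ phi3 b₁ b₂ c₁ c₂ δ₁ δ₂ σ₁ σ₂ X *ᵥ y).re =
      (((‖b₁‖ + ‖c₁‖) ^ 2 + δ₁ ^ 2) * (X 0 0).re + σ₂ ^ 2 * (X 1 1).re) * ‖y 0‖ ^ 2 +
        (((‖b₂‖ + ‖c₂‖) ^ 2 + δ₂ ^ 2) * (X 1 1).re + σ₁ ^ 2 * (X 0 0).re) * ‖y 1‖ ^ 2 +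
        (X 2 2).re * ‖y 2‖ ^ 2 +
        2 * (conj (y 0) * (b₁ * X 0 2 + c₁ * conj (X 0 2)) * y 2).re +
        2 * (conj (y 1) * (b₂ * X 1 2 + c₂ * conj (X 1 2)) * y 2).re := by
  have hc : ∀ i j, conj (X i j) = X j i := fun i j => hX.apply j i
  have hre : ∀ i, ((X i i).re : ℂ) = X i i := hX.coe_re_apply_self
  have him := (isHermitian_phi3 b₁ b₂ c₁ c₂ δ₁ δ₂ σ₁ σ₂ hX).im_star_dotProduct_mulVec_self y
  rw [← ofReal_inj, conj_eq_iff_re.1 (conj_eq_iff_im.2 him)]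
  simp only [phi3, mulVec, dotProduct, Fin.sum_univ_three, of_apply, cons_val', cons_val_zero,
    cons_val_one, cons_val_two, empty_val', cons_val_fin_one, tail_cons, Pi.star_apply,
    star_def, vecHead]
  push_cast
  simp only [re_eq_add_conj, ← mul_conj', map_add, map_mul, conj_conj, hc, hre]
  ring

theorem isPosMap_phi3 (h : (‖b₁‖ + ‖c₁‖) * (‖b₂‖ + ‖c₂‖) ≤ σ₁ * σ₂ + δ₁ * δ₂) :
    IsPosMap (phi3 b₁ b₂ c₁ c₂ δ₁ δ₂ σ₁ σ₂) := by
  intro X hX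
  refine Matrix.posSemidef_of_re_dotProduct_mulVec_nonneg (isHermitian_phi3 _ _ _ _ _ _ _ _ hX.1)
    fun y => ?_
  rw [re_star_dotProduct_phi3_mulVec _ _ _ _ _ _ _ _ hX.1]
  have hdiag : ∀ i, Real.sqrt (X i i).re ^ 2 = (X i i).re := fun i =>
    Real.sq_sqrt (Complex.le_def.1 hX.diag_nonneg).1
  have hcross : ∀ (b c : ℂ) (i : Fin 3),
      -((‖b‖ + ‖c‖) * (Real.sqrt (X i i).re * Real.sqrt (X 2 2).re) * ‖y i‖ * ‖y 2‖) ≤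
        (conj (y i) * (b * X i 2 + c * conj (X i 2)) * y 2).re := fun b c i => by
    refine Complex.neg_mul_le_re_conj_mul_mul ((Complex.norm_mul_add_mul_conj_le b c _).trans ?_)
    gcongr
    rw [← Real.sqrt_mul (Complex.le_def.1 hX.diag_nonneg).1]
    exact Real.le_sqrt_of_sq_le (hX.norm_sq_apply_le i 2)
  have := two_mul_add_mul_le_of_mul_le_add_mul (Real.sqrt_nonneg (X 0 0).re)
    (Real.sqrt_nonneg (X 1 1).re) (norm_nonneg (y 0)) (norm_nonneg (y 1))
    (u := Real.sqrt (X 2 2).re) (z := ‖y 2‖) h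
  rw [hdiag, hdiag, hdiag] at this
  linarith [hcross b₁ c₁ 0, hcross b₂ c₂ 1]

theorem forall_two_mul_add_mul_le_of_isPosMap_phi3 (h : IsPosMap (phi3 b₁ b₂ c₁ c₂ δ₁ δ₂ σ₁ σ₂))
    (t p q : ℝ) :
    2 * ((‖b₁‖ + ‖c₁‖) * p + (‖b₂‖ + ‖c₂‖) * t * q) ≤
      ((‖b₁‖ + ‖c₁‖) ^ 2 + δ₁ ^ 2 + σ₂ ^ 2 * t ^ 2) * p ^ 2 +
        (((‖b₂‖ + ‖c₂‖) ^ 2 + δ₂ ^ 2) * t ^ 2 + σ₁ ^ 2) * q ^ 2 + 1 := by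
  obtain ⟨μ₁, ν₁, hμ₁, hν₁, hw₁⟩ := Complex.exists_norm_eq_one_mul_add_mul_conj_eq b₁ c₁
  obtain ⟨μ₂, ν₂, hμ₂, hν₂, hw₂⟩ := Complex.exists_norm_eq_one_mul_add_mul_conj_eq b₂ c₂
  set η : Fin 3 → ℂ := ![μ₁, t * μ₂, 1] with hη
  set y : Fin 3 → ℂ := ![p * conj ν₁, q * conj ν₂, -1] with hy
  have hX := posSemidef_vecMulVec_self_star η
  have hQ := (h _ hX).re_dotProduct_nonneg y
  rw [RCLike.re_to_complex, re_star_dotProduct_phi3_mulVec _ _ _ _ _ _ _ _ hX.1] at hQ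
  have hent : ∀ i j, vecMulVec η (star η) i j = η i * conj (η j) := fun _ _ => rfl
  have h00 : (vecMulVec η (star η) 0 0).re = 1 := by
    rw [hent, mul_conj']; simp [hη, hμ₁]
  have h11 : (vecMulVec η (star η) 1 1).re = t ^ 2 := by
    rw [hent, mul_conj']; simp [hη, hμ₂, ← ofReal_pow]
  have h22 : (vecMulVec η (star η) 2 2).re = 1 := by
    rw [hent, mul_conj']; simp [hη]
  have hy0 : ‖y 0‖ ^ 2 = p ^ 2 := by simp [hy, hν₁]
  have hy1 : ‖y 1‖ ^ 2 = q ^ 2 := by simp [hy, hν₂]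
  have hy2 : ‖y 2‖ ^ 2 = 1 := by simp [hy]
  have hc₁ : conj (y 0) * (b₁ * vecMulVec η (star η) 0 2 +
      c₁ * conj (vecMulVec η (star η) 0 2)) * y 2 = (-(p * (‖b₁‖ + ‖c₁‖)) : ℝ) := by
    show conj (p * conj ν₁) * (b₁ * (μ₁ * conj 1) + c₁ * conj (μ₁ * conj 1)) * -1 = _
    push_cast; rw [← hw₁]; simp only [map_mul, conj_conj, conj_ofReal, map_one]; ring
  have hc₂ : conj (y 1) * (b₂ * vecMulVec η (star η) 1 2 +
      c₂ * conj (vecMulVec η (star η) 1 2)) * y 2 = (-(q * t * (‖b₂‖ + ‖c₂‖)) : ℝ) := by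
    show conj (q * conj ν₂) * (b₂ * (t * μ₂ * conj 1) + c₂ * conj (t * μ₂ * conj 1)) * -1 = _
    push_cast; rw [← hw₂]; simp only [map_mul, conj_conj, conj_ofReal, map_one]; ring
  rw [h00, h11, h22, hy0, hy1, hy2, hc₁, hc₂, ofReal_re, ofReal_re] at hQ
  linarith

end

/-- The map `phi3` is positive iff `σ₁σ₂ + δ₁δ₂ ≥ ε₁ε₂`. -/
theorem statement15 (b₁ b₂ c₁ c₂ : ℂ) (δ₁ δ₂ σ₁ σ₂ : ℝ)
    (hδ₁ : 0 ≤ δ₁) (hδ₂ : 0 ≤ δ₂) (hσ₁ : 0 ≤ σ₁) (hσ₂ : 0 ≤ σ₂) :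
    IsPosMap (phi3 b₁ b₂ c₁ c₂ δ₁ δ₂ σ₁ σ₂) ↔
      (‖b₁‖ + ‖c₁‖) * (‖b₂‖ + ‖c₂‖) ≤
        σ₁ * σ₂ + δ₁ * δ₂ :=
  ⟨fun h => mul_le_add_mul_of_forall_two_mul_add_mul_le (mul_nonneg hδ₁ hδ₂) (mul_nonneg hσ₁ hσ₂)
      (forall_two_mul_add_mul_le_of_isPosMap_phi3 b₁ b₂ c₁ c₂ δ₁ δ₂ σ₁ σ₂ h),
    isPosMap_phi3 b₁ b₂ c₁ c₂ δ₁ δ₂ σ₁ σ₂⟩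

end Paper
end
end

section
/- Let φ : M₃(ℂ) → M₃(ℂ) be the map determined by parameters b₁, b₂, c₁, c₂ ∈ ℂ and δ₁, δ₂, σ₁, σ₂ ≥ 0, with ε_i = |b_i| + |c_i|, given by φ(X) = [[(ε₁²+δ₁²)x₁₁ + σ₂²x₂₂, 0, b₁x₁₃ + c₁x₃₁], [0, (ε₂²+δ₂²)x₂₂ + σ₁²x₁₁, b₂x₂₃ + c₂x₃₂], [conj(b₁)x₃₁ + conj(c₁)x₁₃, conj(b₂)x₃₂ + conj(c₂)x₂₃, x₃₃]]. Then the following are equivalent: (i) φ is completely positive; (ii) φ is 2-positive; (iii) c₁ = c₂ = 0 and δ₁δ₂ ≥ ε₁ε₂. Analogously, φ is completely copositive iff φ is 2-copositive iff b₁ = b₂ = 0 and δ₁δ₂ ≥ ε₁ε₂. -/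
open scoped ComplexOrder
open Matrix

noncomputable section
namespace Paper

section Helpers

lemma vecMulVec_psd {n : Type*} [Fintype n] [DecidableEq n] (v : n → ℂ) :
    (Matrix.vecMulVec v (star v)).PosSemidef := by
  have : Matrix.vecMulVec v (star v) = (Matrix.replicateCol (Fin 1) v) * (Matrix.replicateCol (Fin 1) v)ᴴ := by
    ext i j
    simp [Matrix.vecMulVec, Matrix.mul_apply, Matrix.col]
  rw [this]
  exact Matrix.posSemidef_self_mul_conjTranspose _

lemma prod_bound (β γ d₁ d₂ : ℝ) (hβ : 0 ≤ β) (hγ : 0 ≤ γ) (hd₁ : 0 ≤ d₁) (hd₂ : 0 ≤ d₂)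
    (H : ∀ s t : ℝ, 0 ≤ s → 0 ≤ t →
      0 ≤ (β+d₁)*β*s^2 + (γ+d₂)*γ*t^2 + 1 - 2*β*s - 2*γ*t) : β*γ ≤ d₁*d₂ := by
  rcases eq_or_lt_of_le (by positivity : (0:ℝ) ≤ β + d₁) with h1 | h1
  · have hb : β = 0 := by linarith
    rw [hb, zero_mul]; positivity
  · rcases eq_or_lt_of_le (by positivity : (0:ℝ) ≤ γ + d₂) with h2 | h2
    · have hg : γ = 0 := by linarith
      rw [hg, mul_zero]; positivity
    · have h := H (1/(β+d₁)) (1/(γ+d₂)) (by positivity) (by positivity)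
      have e1 : (β+d₁)*β*(1/(β+d₁))^2 = β/(β+d₁) := by field_simp
      have e2 : (γ+d₂)*γ*(1/(γ+d₂))^2 = γ/(γ+d₂) := by field_simp
      rw [e1, e2] at h
      have h3 : β/(β+d₁) + γ/(γ+d₂) ≤ 1 := by
        have e3 : 2*β*(1/(β+d₁)) = 2*(β/(β+d₁)) := by ring
        rw [e3] at h
        have e4 : 2*γ*(1/(γ+d₂)) = 2*(γ/(γ+d₂)) := by ring
        rw [e4] at h
        linarith
      rw [div_add_div _ _ (ne_of_gt h1) (ne_of_gt h2), div_le_one (by positivity)] at h3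
      nlinarith

lemma conjmulE (V : Matrix (Fin 3) (Fin 3) ℂ) (a b s t : Fin 3) :
    (V * Matrix.single a b (1:ℂ) * Vᴴ) s t = V s a * (starRingEnd ℂ) (V t b) := by
  simp [Matrix.mul_apply, Matrix.single, Matrix.conjTranspose_apply, ite_and,
    Finset.mul_sum, Finset.sum_mul, mul_ite, ite_mul, Finset.sum_ite_eq, Finset.sum_ite_eq']

def kron2 (V : Matrix (Fin 3) (Fin 3) ℂ) : Matrix (Fin 2 × Fin 3) (Fin 2 × Fin 3) ℂ :=
  Matrix.of fun p q => if p.1 = q.1 then V p.2 q.2 else 0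

lemma kronE (V : Matrix (Fin 3) (Fin 3) ℂ) (Y : Matrix (Fin 2 × Fin 3) (Fin 2 × Fin 3) ℂ)
    (i j : Fin 2) (s t : Fin 3) :
    (kron2 V * Y * (kron2 V)ᴴ) (i,s) (j,t)
      = (V * (Matrix.of fun a b => Y (i,a) (j,b)) * Vᴴ) s t := by
  simp [kron2, Matrix.mul_apply, Matrix.conjTranspose_apply, Fintype.sum_prod_type,
    mul_ite, ite_mul, Finset.sum_ite_eq, Finset.sum_ite_eq', apply_ite, Finset.mul_sum,
    Finset.sum_mul]

lemma frac_le (p q d₁ d₂ : ℝ) (hp : 0 ≤ p) (hq : 0 ≤ q) (h : p*q ≤ d₁*d₂) :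
    p^2/(p^2+d₁^2) + q^2/(q^2+d₂^2) ≤ 1 := by
  rcases eq_or_lt_of_le (by positivity : (0:ℝ) ≤ p^2+d₁^2) with h1 | h1
  · rcases eq_or_lt_of_le (by positivity : (0:ℝ) ≤ q^2+d₂^2) with h2 | h2
    · simp [← h1, ← h2]
    · rw [← h1]
      simp only [div_zero, zero_add]
      rw [div_le_one h2]; nlinarith
  · rcases eq_or_lt_of_le (by positivity : (0:ℝ) ≤ q^2+d₂^2) with h2 | h2
    · rw [← h2]
      simp only [div_zero, add_zero]
      rw [div_le_one h1]; nlinarith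
    · rw [div_add_div _ _ (ne_of_gt h1) (ne_of_gt h2), div_le_one (by positivity)]
      nlinarith [mul_self_le_mul_self (mul_nonneg hp hq) h]

lemma kraus (b₁ b₂ : ℂ) (δ₁ δ₂ σ₁ σ₂ : ℝ)
    (h : ‖b₁‖ * ‖b₂‖ ≤ δ₁ * δ₂) :
    ∃ V₁ V₂ V₃ V₄ V₅ : Matrix (Fin 3) (Fin 3) ℂ,
      ∀ X, phi3 b₁ b₂ 0 0 δ₁ δ₂ σ₁ σ₂ X =
        V₁*X*V₁ᴴ + V₂*X*V₂ᴴ + V₃*X*V₃ᴴ + V₄*X*V₄ᴴ + V₅*X*V₅ᴴ := by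
  set p := ‖b₁‖ with hp
  set q := ‖b₂‖ with hq
  set s₁ : ℝ := Real.sqrt (p^2+δ₁^2) with hs₁def
  set s₂ : ℝ := Real.sqrt (q^2+δ₂^2) with hs₂def
  have hs₁ : s₁^2 = p^2+δ₁^2 := Real.sq_sqrt (by positivity)
  have hs₂ : s₂^2 = q^2+δ₂^2 := Real.sq_sqrt (by positivity)
  set u₁ : ℂ := (starRingEnd ℂ) b₁ / (s₁ : ℂ) with hu₁def
  set u₂ : ℂ := (starRingEnd ℂ) b₂ / (s₂ : ℂ) with hu₂def
  have hns₁ : Complex.normSq u₁ = p^2/(p^2+δ₁^2) := by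
    rw [hu₁def, Complex.normSq_div, Complex.normSq_conj, ← Complex.sq_norm, ← hp,
      Complex.normSq_ofReal, ← hs₁]
    ring_nf
  have hns₂ : Complex.normSq u₂ = q^2/(q^2+δ₂^2) := by
    rw [hu₂def, Complex.normSq_div, Complex.normSq_conj, ← Complex.sq_norm, ← hq,
      Complex.normSq_ofReal, ← hs₂]
    ring_nf
  set τ : ℝ := 1 - Complex.normSq u₁ - Complex.normSq u₂ with hτdef
  have hτ : 0 ≤ τ := by
    have := frac_le p q δ₁ δ₂ (norm_nonneg _) (norm_nonneg _) h
    rw [hτdef, hns₁, hns₂]; linarith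
  have hτs : (Real.sqrt τ)^2 = τ := Real.sq_sqrt hτ
  have hu₁b : (s₁ : ℂ) * (starRingEnd ℂ) u₁ = b₁ := by
    by_cases hz : s₁ = 0
    · have hb : b₁ = 0 := by
        have : p^2 + δ₁^2 = 0 := by
          rw [← hs₁, hz]; ring
        have hp0 : p = 0 := by nlinarith [norm_nonneg b₁, sq_nonneg δ₁]
        exact norm_eq_zero.mp hp0
      simp [hz, hb, hu₁def]
    · rw [hu₁def]
      rw [map_div₀, Complex.conj_conj, Complex.conj_ofReal]
      rw [mul_div_cancel₀]
      exact_mod_cast hz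
  have hu₂b : (s₂ : ℂ) * (starRingEnd ℂ) u₂ = b₂ := by
    by_cases hz : s₂ = 0
    · have hb : b₂ = 0 := by
        have : q^2 + δ₂^2 = 0 := by
          rw [← hs₂, hz]; ring
        have hp0 : q = 0 := by nlinarith [norm_nonneg b₂, sq_nonneg δ₂]
        exact norm_eq_zero.mp hp0
      simp [hz, hb, hu₂def]
    · rw [hu₂def, map_div₀, Complex.conj_conj, Complex.conj_ofReal, mul_div_cancel₀]
      exact_mod_cast hz
  have hu₁b' : u₁ * (s₁ : ℂ) = (starRingEnd ℂ) b₁ := by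
    have := congrArg (starRingEnd ℂ) hu₁b
    simpa [mul_comm, Complex.conj_ofReal] using this
  have hu₂b' : u₂ * (s₂ : ℂ) = (starRingEnd ℂ) b₂ := by
    have := congrArg (starRingEnd ℂ) hu₂b
    simpa [mul_comm, Complex.conj_ofReal] using this
  refine ⟨!![(s₁:ℂ),0,0; 0,0,0; 0,0,u₁], !![0,0,0; 0,(s₂:ℂ),0; 0,0,u₂],
    !![0,(σ₂:ℂ),0; 0,0,0; 0,0,0], !![0,0,0; (σ₁:ℂ),0,0; 0,0,0],
    !![0,0,0; 0,0,0; 0,0,(Real.sqrt τ : ℂ)], fun X => ?_⟩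
  ext i j
  have hns₁' : u₁ * (starRingEnd ℂ) u₁ = (Complex.normSq u₁ : ℂ) := Complex.mul_conj u₁
  have hns₂' : u₂ * (starRingEnd ℂ) u₂ = (Complex.normSq u₂ : ℂ) := Complex.mul_conj u₂
  have hs₁c : (s₁:ℂ) * (s₁:ℂ) = ((p^2+δ₁^2 : ℝ) : ℂ) := by
    rw [← Complex.ofReal_mul, ← sq, hs₁]
  have hs₂c : (s₂:ℂ) * (s₂:ℂ) = ((q^2+δ₂^2 : ℝ) : ℂ) := by
    rw [← Complex.ofReal_mul, ← sq, hs₂]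
  have hτc : (Real.sqrt τ : ℂ) * (Real.sqrt τ : ℂ) = (τ : ℂ) := by
    rw [← Complex.ofReal_mul, ← sq, hτs]
  have hsum : (Complex.normSq u₁ : ℂ) + (Complex.normSq u₂ : ℂ) + (τ:ℂ) = 1 := by
    rw [hτdef]; push_cast; ring
  have hσ₁c : (σ₁:ℂ) * (σ₁:ℂ) = ((σ₁^2 : ℝ) : ℂ) := by rw [← Complex.ofReal_mul, ← sq]
  have hσ₂c : (σ₂:ℂ) * (σ₂:ℂ) = ((σ₂^2 : ℝ) : ℂ) := by rw [← Complex.ofReal_mul, ← sq]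
  have htot : u₁ * (starRingEnd ℂ) u₁ + u₂ * (starRingEnd ℂ) u₂ +
      ((Real.sqrt τ : ℝ) : ℂ) * ((Real.sqrt τ : ℝ) : ℂ) = 1 := by
    rw [hns₁', hns₂', hτc]; exact hsum
  fin_cases i <;> fin_cases j <;>
    simp only [phi3, Matrix.mul_apply, Fin.sum_univ_three, Matrix.conjTranspose_apply,
      Fin.zero_eta, Fin.mk_one, Fin.reduceFinMk, Matrix.cons_val', Matrix.cons_val_zero,
      Matrix.cons_val_one, Matrix.cons_val_two, Matrix.head_cons, Matrix.tail_cons,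
      Matrix.head_fin_const, Matrix.empty_val', Matrix.cons_val_fin_one, Matrix.of_apply,
      Matrix.add_apply, Complex.star_def, Complex.conj_ofReal, map_zero, norm_zero, star_zero,
      mul_zero, zero_mul, add_zero, zero_add]
  · linear_combination X 0 0 * hs₁c.symm + X 1 1 * hσ₂c.symm
  · linear_combination X 0 2 * hu₁b.symm
  · linear_combination X 1 1 * hs₂c.symm + X 0 0 * hσ₁c.symm
  · linear_combination X 1 2 * hu₂b.symm
  · linear_combination X 2 0 * hu₁b'.symm
  · linear_combination X 2 1 * hu₂b'.symm
  · linear_combination X 2 2 * htot.symm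

lemma cond_isCP (b₁ b₂ : ℂ) (δ₁ δ₂ σ₁ σ₂ : ℝ)
    (h : ‖b₁‖ * ‖b₂‖ ≤ δ₁ * δ₂) :
    IsCP (phi3 b₁ b₂ 0 0 δ₁ δ₂ σ₁ σ₂) := by
  obtain ⟨V₁, V₂, V₃, V₄, V₅, hV⟩ := kraus b₁ b₂ δ₁ δ₂ σ₁ σ₂ h
  have key : choi (phi3 b₁ b₂ 0 0 δ₁ δ₂ σ₁ σ₂) =
      Matrix.vecMulVec (fun p : Fin 3 × Fin 3 => V₁ p.2 p.1) (star fun p => V₁ p.2 p.1)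
      + Matrix.vecMulVec (fun p : Fin 3 × Fin 3 => V₂ p.2 p.1) (star fun p => V₂ p.2 p.1)
      + Matrix.vecMulVec (fun p : Fin 3 × Fin 3 => V₃ p.2 p.1) (star fun p => V₃ p.2 p.1)
      + Matrix.vecMulVec (fun p : Fin 3 × Fin 3 => V₄ p.2 p.1) (star fun p => V₄ p.2 p.1)
      + Matrix.vecMulVec (fun p : Fin 3 × Fin 3 => V₅ p.2 p.1) (star fun p => V₅ p.2 p.1) := by
    ext p q
    simp only [choi, Matrix.of_apply, hV, Matrix.add_apply, Matrix.vecMulVec_apply,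
      Pi.star_apply, conjmulE]
    rfl
  rw [IsCP, key]
  exact (((((vecMulVec_psd _).add (vecMulVec_psd _)).add (vecMulVec_psd _)).add
    (vecMulVec_psd _)).add (vecMulVec_psd _))

lemma cond_is2Pos (b₁ b₂ : ℂ) (δ₁ δ₂ σ₁ σ₂ : ℝ)
    (h : ‖b₁‖ * ‖b₂‖ ≤ δ₁ * δ₂) :
    Is2Pos (phi3 b₁ b₂ 0 0 δ₁ δ₂ σ₁ σ₂) := by
  obtain ⟨V₁, V₂, V₃, V₄, V₅, hV⟩ := kraus b₁ b₂ δ₁ δ₂ σ₁ σ₂ h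
  intro Y hY
  have key : ampl2 (phi3 b₁ b₂ 0 0 δ₁ δ₂ σ₁ σ₂) Y =
      kron2 V₁ * Y * (kron2 V₁)ᴴ + kron2 V₂ * Y * (kron2 V₂)ᴴ + kron2 V₃ * Y * (kron2 V₃)ᴴ
      + kron2 V₄ * Y * (kron2 V₄)ᴴ + kron2 V₅ * Y * (kron2 V₅)ᴴ := by
    ext p q
    obtain ⟨i, s⟩ := p
    obtain ⟨j, t⟩ := q
    simp only [ampl2, Matrix.of_apply, hV, Matrix.add_apply, kronE]
  rw [key]
  exact ((((hY.mul_mul_conjTranspose_same _).add (hY.mul_mul_conjTranspose_same _)).add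
    (hY.mul_mul_conjTranspose_same _)).add (hY.mul_mul_conjTranspose_same _)).add
    (hY.mul_mul_conjTranspose_same _)

end Helpers


section Witness

lemma isCP_c1 (b₁ b₂ c₁ c₂ : ℂ) (δ₁ δ₂ σ₁ σ₂ : ℝ)
    (h : IsCP (phi3 b₁ b₂ c₁ c₂ δ₁ δ₂ σ₁ σ₂)) : c₁ = 0 := by
  have hz := h.dotProduct_mulVec_nonneg (fun p : Fin 3 × Fin 3 =>
    if p = (0,2) then 1 else if p = (2,0) then -c₁ else 0)
  simp only [dotProduct, Matrix.mulVec, choi, phi3, Matrix.of_apply,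
    Fintype.sum_prod_type, Fin.sum_univ_three, Pi.star_apply, Matrix.single,
    Fin.zero_eta, Fin.mk_one, Fin.reduceFinMk, Matrix.cons_val', Matrix.cons_val_zero,
    Matrix.cons_val_one, Matrix.cons_val_two, Matrix.head_cons, Matrix.tail_cons,
    Matrix.head_fin_const, Matrix.empty_val', Matrix.cons_val_fin_one] at hz
  norm_num [Prod.ext_iff, Fin.ext_iff] at hz
  have h2 : (starRingEnd ℂ) c₁ * c₁ = ((Complex.normSq c₁ : ℝ) : ℂ) := by
    rw [mul_comm]; exact Complex.mul_conj c₁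
  rw [h2, ← Complex.ofReal_neg, Complex.real_le_real] at hz
  exact Complex.normSq_eq_zero.mp (le_antisymm (by linarith) (Complex.normSq_nonneg c₁))

lemma isCP_c2 (b₁ b₂ c₁ c₂ : ℂ) (δ₁ δ₂ σ₁ σ₂ : ℝ)
    (h : IsCP (phi3 b₁ b₂ c₁ c₂ δ₁ δ₂ σ₁ σ₂)) : c₂ = 0 := by
  have hz := h.dotProduct_mulVec_nonneg (fun p : Fin 3 × Fin 3 =>
    if p = (1,2) then 1 else if p = (2,1) then -c₂ else 0)
  simp only [dotProduct, Matrix.mulVec, choi, phi3, Matrix.of_apply,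
    Fintype.sum_prod_type, Fin.sum_univ_three, Pi.star_apply, Matrix.single,
    Fin.zero_eta, Fin.mk_one, Fin.reduceFinMk, Matrix.cons_val', Matrix.cons_val_zero,
    Matrix.cons_val_one, Matrix.cons_val_two, Matrix.head_cons, Matrix.tail_cons,
    Matrix.head_fin_const, Matrix.empty_val', Matrix.cons_val_fin_one] at hz
  norm_num [Prod.ext_iff, Fin.ext_iff] at hz
  have h2 : (starRingEnd ℂ) c₂ * c₂ = ((Complex.normSq c₂ : ℝ) : ℂ) := by
    rw [mul_comm]; exact Complex.mul_conj c₂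
  rw [h2, ← Complex.ofReal_neg, Complex.real_le_real] at hz
  exact Complex.normSq_eq_zero.mp (le_antisymm (by linarith) (Complex.normSq_nonneg c₂))

lemma isCP_ineq (b₁ b₂ : ℂ) (δ₁ δ₂ σ₁ σ₂ : ℝ) (hδ₁ : 0 ≤ δ₁) (hδ₂ : 0 ≤ δ₂)
    (h : IsCP (phi3 b₁ b₂ 0 0 δ₁ δ₂ σ₁ σ₂)) :
    ‖b₁‖ * ‖b₂‖ ≤ δ₁ * δ₂ := by
  have key : Complex.normSq b₁ * Complex.normSq b₂ ≤ δ₁^2 * δ₂^2 := by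
    apply prod_bound _ _ _ _ (Complex.normSq_nonneg b₁) (Complex.normSq_nonneg b₂)
      (sq_nonneg δ₁) (sq_nonneg δ₂)
    intro s t hs ht
    have hz := h.dotProduct_mulVec_nonneg (fun p : Fin 3 × Fin 3 =>
      if p = (0,0) then -(b₁ * (s:ℝ)) else if p = (1,1) then -(b₂ * (t:ℝ))
      else if p = (2,2) then 1 else 0)
    simp only [dotProduct, Matrix.mulVec, choi, phi3, Matrix.of_apply,
      Fintype.sum_prod_type, Fin.sum_univ_three, Pi.star_apply, Matrix.single,
      Fin.zero_eta, Fin.mk_one, Fin.reduceFinMk, Matrix.cons_val', Matrix.cons_val_zero,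
      Matrix.cons_val_one, Matrix.cons_val_two, Matrix.head_cons, Matrix.tail_cons,
      Matrix.head_fin_const, Matrix.empty_val', Matrix.cons_val_fin_one] at hz
    norm_num [Prod.ext_iff, Fin.ext_iff] at hz
    have h' := (Complex.le_def.mp hz).1
    simp only [← Complex.ofReal_pow, Complex.sq_norm, Complex.add_re, Complex.neg_re,
      Complex.mul_re, Complex.mul_im, Complex.add_im, Complex.neg_im, Complex.one_re,
      Complex.one_im, Complex.ofReal_re, Complex.ofReal_im, Complex.conj_re,
      Complex.conj_im, Complex.zero_re, Complex.zero_im, Complex.re_ofNat,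
      Complex.im_ofNat, Complex.normSq_apply] at h'
    simp only [Complex.normSq_apply]
    ring_nf at h' ⊢
    linarith [h']
  have h1 : (‖b₁‖ * ‖b₂‖)^2 ≤ (δ₁*δ₂)^2 := by
    rw [mul_pow, Complex.sq_norm, Complex.sq_norm]; nlinarith
  nlinarith [norm_nonneg b₁, norm_nonneg b₂,
    mul_nonneg (norm_nonneg b₁) (norm_nonneg b₂), mul_nonneg hδ₁ hδ₂, h1]

end Witness


lemma is2Pos_c1 (b₁ b₂ c₁ c₂ : ℂ) (δ₁ δ₂ σ₁ σ₂ : ℝ)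
    (h : Is2Pos (phi3 b₁ b₂ c₁ c₂ δ₁ δ₂ σ₁ σ₂)) : c₁ = 0 := by
  set v : Fin 2 × Fin 3 → ℂ := fun p => if p = (0,0) then 1 else if p = (1,2) then 1 else 0
    with hv
  have hY := h (Matrix.vecMulVec v (star v)) (vecMulVec_psd v)
  have hz := hY.dotProduct_mulVec_nonneg (fun p : Fin 2 × Fin 3 =>
    if p = (0,2) then 1 else if p = (1,0) then -c₁ else 0)
  simp only [dotProduct, Matrix.mulVec, ampl2, phi3, Matrix.of_apply, hv,
    Matrix.vecMulVec_apply, Pi.star_apply, Fintype.sum_prod_type, Fin.sum_univ_two,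
    Fin.sum_univ_three,
    Fin.zero_eta, Fin.mk_one, Fin.reduceFinMk, Matrix.cons_val', Matrix.cons_val_zero,
    Matrix.cons_val_one, Matrix.cons_val_two, Matrix.head_cons, Matrix.tail_cons,
    Matrix.head_fin_const, Matrix.empty_val', Matrix.cons_val_fin_one] at hz
  norm_num [Prod.ext_iff, Fin.ext_iff] at hz
  have h2 : (starRingEnd ℂ) c₁ * c₁ = ((Complex.normSq c₁ : ℝ) : ℂ) := by
    rw [mul_comm]; exact Complex.mul_conj c₁
  rw [h2, ← Complex.ofReal_neg, Complex.real_le_real] at hz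
  exact Complex.normSq_eq_zero.mp (le_antisymm (by linarith) (Complex.normSq_nonneg c₁))

lemma is2Pos_c2 (b₁ b₂ c₁ c₂ : ℂ) (δ₁ δ₂ σ₁ σ₂ : ℝ)
    (h : Is2Pos (phi3 b₁ b₂ c₁ c₂ δ₁ δ₂ σ₁ σ₂)) : c₂ = 0 := by
  set v : Fin 2 × Fin 3 → ℂ := fun p => if p = (0,1) then 1 else if p = (1,2) then 1 else 0
    with hv
  have hY := h (Matrix.vecMulVec v (star v)) (vecMulVec_psd v)
  have hz := hY.dotProduct_mulVec_nonneg (fun p : Fin 2 × Fin 3 =>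
    if p = (0,2) then 1 else if p = (1,1) then -c₂ else 0)
  simp only [dotProduct, Matrix.mulVec, ampl2, phi3, Matrix.of_apply, hv,
    Matrix.vecMulVec_apply, Pi.star_apply, Fintype.sum_prod_type, Fin.sum_univ_two,
    Fin.sum_univ_three,
    Fin.zero_eta, Fin.mk_one, Fin.reduceFinMk, Matrix.cons_val', Matrix.cons_val_zero,
    Matrix.cons_val_one, Matrix.cons_val_two, Matrix.head_cons, Matrix.tail_cons,
    Matrix.head_fin_const, Matrix.empty_val', Matrix.cons_val_fin_one] at hz
  norm_num [Prod.ext_iff, Fin.ext_iff] at hz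
  have h2 : (starRingEnd ℂ) c₂ * c₂ = ((Complex.normSq c₂ : ℝ) : ℂ) := by
    rw [mul_comm]; exact Complex.mul_conj c₂
  rw [h2, ← Complex.ofReal_neg, Complex.real_le_real] at hz
  exact Complex.normSq_eq_zero.mp (le_antisymm (by linarith) (Complex.normSq_nonneg c₂))

lemma is2Pos_ineq (b₁ b₂ : ℂ) (δ₁ δ₂ σ₁ σ₂ : ℝ) (hδ₁ : 0 ≤ δ₁) (hδ₂ : 0 ≤ δ₂)
    (h : Is2Pos (phi3 b₁ b₂ 0 0 δ₁ δ₂ σ₁ σ₂)) :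
    ‖b₁‖ * ‖b₂‖ ≤ δ₁ * δ₂ := by
  have key : Complex.normSq b₁ * Complex.normSq b₂ ≤ δ₁^2 * δ₂^2 := by
    apply prod_bound _ _ _ _ (Complex.normSq_nonneg b₁) (Complex.normSq_nonneg b₂)
      (sq_nonneg δ₁) (sq_nonneg δ₂)
    intro s t hs ht
    set v : Fin 2 × Fin 3 → ℂ := fun p =>
      if p = (0,0) then -(2 * (starRingEnd ℂ) b₁ * (s:ℝ)) else if p = (0,2) then 1
      else if p = (1,1) then -(2 * (starRingEnd ℂ) b₂ * (t:ℝ)) else if p = (1,2) then 1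
      else 0 with hv
    have hY := h (Matrix.vecMulVec v (star v)) (vecMulVec_psd v)
    have hz := hY.dotProduct_mulVec_nonneg (fun p : Fin 2 × Fin 3 =>
      if p = (0,0) then 1 else if p = (0,2) then 1
      else if p = (1,1) then 1 else if p = (1,2) then 1 else 0)
    simp only [dotProduct, Matrix.mulVec, ampl2, phi3, Matrix.of_apply, hv,
      Matrix.vecMulVec_apply, Pi.star_apply, Fintype.sum_prod_type, Fin.sum_univ_two,
      Fin.sum_univ_three,
      Fin.zero_eta, Fin.mk_one, Fin.reduceFinMk, Matrix.cons_val', Matrix.cons_val_zero,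
      Matrix.cons_val_one, Matrix.cons_val_two, Matrix.head_cons, Matrix.tail_cons,
      Matrix.head_fin_const, Matrix.empty_val', Matrix.cons_val_fin_one] at hz
    norm_num [Prod.ext_iff, Fin.ext_iff] at hz
    have h' := (Complex.le_def.mp hz).1
    simp only [← Complex.ofReal_pow, Complex.sq_norm, Complex.add_re, Complex.neg_re,
      Complex.mul_re, Complex.mul_im, Complex.add_im, Complex.neg_im, Complex.one_re,
      Complex.one_im, Complex.ofReal_re, Complex.ofReal_im, Complex.conj_re,
      Complex.conj_im, Complex.zero_re, Complex.zero_im, Complex.re_ofNat,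
      Complex.im_ofNat, Complex.normSq_apply] at h'
    simp only [Complex.normSq_apply]
    ring_nf at h' ⊢
    linarith [h']
  have h1 : (‖b₁‖ * ‖b₂‖)^2 ≤ (δ₁*δ₂)^2 := by
    rw [mul_pow, Complex.sq_norm, Complex.sq_norm]; nlinarith
  nlinarith [norm_nonneg b₁, norm_nonneg b₂,
    mul_nonneg (norm_nonneg b₁) (norm_nonneg b₂), mul_nonneg hδ₁ hδ₂, h1]


section Transport

lemma phi3_transpose (b₁ b₂ c₁ c₂ : ℂ) (δ₁ δ₂ σ₁ σ₂ : ℝ) (X : Matrix (Fin 3) (Fin 3) ℂ) :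
    phi3 b₁ b₂ c₁ c₂ δ₁ δ₂ σ₁ σ₂ Xᵀ = phi3 c₁ c₂ b₁ b₂ δ₁ δ₂ σ₁ σ₂ X := by
  ext i j
  fin_cases i <;> fin_cases j <;>
    simp [phi3, Matrix.transpose_apply, add_comm] <;> ring

lemma isCCP_iff (b₁ b₂ c₁ c₂ : ℂ) (δ₁ δ₂ σ₁ σ₂ : ℝ) :
    IsCCP (phi3 b₁ b₂ c₁ c₂ δ₁ δ₂ σ₁ σ₂) ↔ IsCP (phi3 c₁ c₂ b₁ b₂ δ₁ δ₂ σ₁ σ₂) := by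
  unfold IsCCP
  rw [show (fun X => phi3 b₁ b₂ c₁ c₂ δ₁ δ₂ σ₁ σ₂ Xᵀ) = phi3 c₁ c₂ b₁ b₂ δ₁ δ₂ σ₁ σ₂ from
    funext (phi3_transpose b₁ b₂ c₁ c₂ δ₁ δ₂ σ₁ σ₂)]

lemma ampl2T_eq (b₁ b₂ c₁ c₂ : ℂ) (δ₁ δ₂ σ₁ σ₂ : ℝ)
    (Y : Matrix (Fin 2 × Fin 3) (Fin 2 × Fin 3) ℂ) :
    ampl2T (phi3 b₁ b₂ c₁ c₂ δ₁ δ₂ σ₁ σ₂) Y = ampl2 (phi3 c₁ c₂ b₁ b₂ δ₁ δ₂ σ₁ σ₂) Yᵀ := by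
  ext p q
  obtain ⟨i, s⟩ := p
  obtain ⟨j, t⟩ := q
  simp only [ampl2T, ampl2, Matrix.of_apply]
  rw [← phi3_transpose b₁ b₂ c₁ c₂ δ₁ δ₂ σ₁ σ₂]
  congr 1

lemma is2Copos_iff (b₁ b₂ c₁ c₂ : ℂ) (δ₁ δ₂ σ₁ σ₂ : ℝ) :
    Is2Copos (phi3 b₁ b₂ c₁ c₂ δ₁ δ₂ σ₁ σ₂) ↔ Is2Pos (phi3 c₁ c₂ b₁ b₂ δ₁ δ₂ σ₁ σ₂) := by
  constructor
  · intro h Y hY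
    have h2 := h Yᵀ hY.transpose
    rw [ampl2T_eq] at h2
    rwa [Matrix.transpose_transpose] at h2
  · intro h Y hY
    show (ampl2T (phi3 b₁ b₂ c₁ c₂ δ₁ δ₂ σ₁ σ₂) Y).PosSemidef
    rw [ampl2T_eq]
    exact h Yᵀ hY.transpose

end Transport

lemma mainPos (b₁ b₂ c₁ c₂ : ℂ) (δ₁ δ₂ σ₁ σ₂ : ℝ) (hδ₁ : 0 ≤ δ₁) (hδ₂ : 0 ≤ δ₂) :
    (IsCP (phi3 b₁ b₂ c₁ c₂ δ₁ δ₂ σ₁ σ₂) ↔ Is2Pos (phi3 b₁ b₂ c₁ c₂ δ₁ δ₂ σ₁ σ₂)) ∧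
      (Is2Pos (phi3 b₁ b₂ c₁ c₂ δ₁ δ₂ σ₁ σ₂) ↔
        c₁ = 0 ∧ c₂ = 0 ∧
          (‖b₁‖ + ‖c₁‖) * (‖b₂‖ + ‖c₂‖) ≤ δ₁ * δ₂) := by
  have hc2 : Is2Pos (phi3 b₁ b₂ c₁ c₂ δ₁ δ₂ σ₁ σ₂) →
      c₁ = 0 ∧ c₂ = 0 ∧
        (‖b₁‖ + ‖c₁‖) * (‖b₂‖ + ‖c₂‖) ≤ δ₁ * δ₂ := by
    intro h
    have h1 := is2Pos_c1 b₁ b₂ c₁ c₂ δ₁ δ₂ σ₁ σ₂ h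
    have h2 := is2Pos_c2 b₁ b₂ c₁ c₂ δ₁ δ₂ σ₁ σ₂ h
    subst h1; subst h2
    refine ⟨rfl, rfl, ?_⟩
    simpa using is2Pos_ineq b₁ b₂ δ₁ δ₂ σ₁ σ₂ hδ₁ hδ₂ h
  have hcCP : IsCP (phi3 b₁ b₂ c₁ c₂ δ₁ δ₂ σ₁ σ₂) →
      c₁ = 0 ∧ c₂ = 0 ∧
        (‖b₁‖ + ‖c₁‖) * (‖b₂‖ + ‖c₂‖) ≤ δ₁ * δ₂ := by
    intro h
    have h1 := isCP_c1 b₁ b₂ c₁ c₂ δ₁ δ₂ σ₁ σ₂ h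
    have h2 := isCP_c2 b₁ b₂ c₁ c₂ δ₁ δ₂ σ₁ σ₂ h
    subst h1; subst h2
    refine ⟨rfl, rfl, ?_⟩
    simpa using isCP_ineq b₁ b₂ δ₁ δ₂ σ₁ σ₂ hδ₁ hδ₂ h
  have hCP : (c₁ = 0 ∧ c₂ = 0 ∧
      (‖b₁‖ + ‖c₁‖) * (‖b₂‖ + ‖c₂‖) ≤ δ₁ * δ₂) →
      IsCP (phi3 b₁ b₂ c₁ c₂ δ₁ δ₂ σ₁ σ₂) := by
    rintro ⟨rfl, rfl, h3⟩
    simp only [norm_zero, add_zero] at h3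
    exact cond_isCP b₁ b₂ δ₁ δ₂ σ₁ σ₂ h3
  have h2P : (c₁ = 0 ∧ c₂ = 0 ∧
      (‖b₁‖ + ‖c₁‖) * (‖b₂‖ + ‖c₂‖) ≤ δ₁ * δ₂) →
      Is2Pos (phi3 b₁ b₂ c₁ c₂ δ₁ δ₂ σ₁ σ₂) := by
    rintro ⟨rfl, rfl, h3⟩
    simp only [norm_zero, add_zero] at h3
    exact cond_is2Pos b₁ b₂ δ₁ δ₂ σ₁ σ₂ h3
  exact ⟨⟨fun h => h2P (hcCP h), fun h => hCP (hc2 h)⟩, ⟨hc2, h2P⟩⟩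

/-- For the map `phi3`: complete positivity, 2-positivity,
and the condition `c₁ = c₂ = 0 ∧ δ₁δ₂ ≥ ε₁ε₂` are equivalent; analogously,
complete copositivity, 2-copositivity and `b₁ = b₂ = 0 ∧ δ₁δ₂ ≥ ε₁ε₂` are
equivalent. -/
theorem statement16 (b₁ b₂ c₁ c₂ : ℂ) (δ₁ δ₂ σ₁ σ₂ : ℝ)
    (hδ₁ : 0 ≤ δ₁) (hδ₂ : 0 ≤ δ₂) (hσ₁ : 0 ≤ σ₁) (hσ₂ : 0 ≤ σ₂) :
    ((IsCP (phi3 b₁ b₂ c₁ c₂ δ₁ δ₂ σ₁ σ₂) ↔ Is2Pos (phi3 b₁ b₂ c₁ c₂ δ₁ δ₂ σ₁ σ₂)) ∧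
      (Is2Pos (phi3 b₁ b₂ c₁ c₂ δ₁ δ₂ σ₁ σ₂) ↔
        c₁ = 0 ∧ c₂ = 0 ∧
          (‖b₁‖ + ‖c₁‖) * (‖b₂‖ + ‖c₂‖) ≤
            δ₁ * δ₂)) ∧
    ((IsCCP (phi3 b₁ b₂ c₁ c₂ δ₁ δ₂ σ₁ σ₂) ↔ Is2Copos (phi3 b₁ b₂ c₁ c₂ δ₁ δ₂ σ₁ σ₂)) ∧
      (Is2Copos (phi3 b₁ b₂ c₁ c₂ δ₁ δ₂ σ₁ σ₂) ↔
        b₁ = 0 ∧ b₂ = 0 ∧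
          (‖b₁‖ + ‖c₁‖) * (‖b₂‖ + ‖c₂‖) ≤
            δ₁ * δ₂)) := by
  refine ⟨mainPos b₁ b₂ c₁ c₂ δ₁ δ₂ σ₁ σ₂ hδ₁ hδ₂, ?_, ?_⟩
  · rw [isCCP_iff, is2Copos_iff]
    exact (mainPos c₁ c₂ b₁ b₂ δ₁ δ₂ σ₁ σ₂ hδ₁ hδ₂).1
  · rw [is2Copos_iff, (mainPos c₁ c₂ b₁ b₂ δ₁ δ₂ σ₁ σ₂ hδ₁ hδ₂).2]
    constructor <;> rintro ⟨ha, hb, hc⟩ <;> refine ⟨ha, hb, ?_⟩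
    · rw [show (‖b₁‖ + ‖c₁‖) * (‖b₂‖ + ‖c₂‖)
        = (‖c₁‖ + ‖b₁‖) * (‖c₂‖ + ‖b₂‖) from by ring]
      exact hc
    · rw [show (‖c₁‖ + ‖b₁‖) * (‖c₂‖ + ‖b₂‖)
        = (‖b₁‖ + ‖c₁‖) * (‖b₂‖ + ‖c₂‖) from by ring]
      exact hc

end Paper
end
end
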